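/- Let n be a positive integer, let {G₁, …, G_J} be a partition of {1, …, n} into nonempty pairwise disjoint index sets, let λ₁ ≥ 0, λ₂ ≥ 0, ω₁, …, ω_J > 0, and set p(x) = λ₁ Σ_{j=1}^J ω_j‖x_{G_j}‖ + λ₂‖x‖₁. Then for every y ∈ ℝⁿ the following are equivalent: (a) ⟨y, x⟩ ≤ p(x) for all x ∈ ℝⁿ; (b) there exist y₁, y₂ ∈ ℝⁿ with y = y₁ + y₂, |(y₁)ᵢ| ≤ λ₂ for all i ∈ {1, …, n}, and ‖(y₂)_{G_j}‖ ≤ λ₁ω_j for all j ∈ {1, …, J}. In other words, the set {y : ⟨y, x⟩ ≤ p(x) for all x} equals the Minkowski sum of the ℓ∞-ball of radius λ₂ and the product of the groupwise ℓ₂-balls of radii λ₁ω_j. -/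

import Mathlib

/-!
Write `y₂` for the soft thresholding of `y` at level `λ₂` and `y₁ = y - y₂` for its clipping to
`[-λ₂, λ₂]`. Coordinatewise `yᵢ (y₂)ᵢ = (y₂)ᵢ² + λ₂ |(y₂)ᵢ|`, so testing the dual inequality
against `y₂` restricted to a group `G_j` leaves `‖(y₂)_{G_j}‖² ≤ λ₁ ω_j ‖(y₂)_{G_j}‖`.
Conversely, `y₁` is controlled by Hölder's inequality against `λ₂ ‖x‖₁`, and `y₂` by
Cauchy–Schwarz on each group of the partition.
-/

open Finset Function

noncomputable section

def sparseGroupPenalty {ι κ : Type*} [Fintype ι] [Fintype κ] (G : κ → Finset ι)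
    (lam₁ lam₂ : ℝ) (ω : κ → ℝ) (x : ι → ℝ) : ℝ :=
  lam₁ * ∑ j, ω j * √(∑ k ∈ G j, x k ^ 2) + lam₂ * ∑ i, |x i|

def softThreshold (c a : ℝ) : ℝ :=
  a - max (min a c) (-c)

end

lemma abs_sub_softThreshold_le {c : ℝ} (hc : 0 ≤ c) (a : ℝ) : |a - softThreshold c a| ≤ c := by
  rw [softThreshold, sub_sub_cancel, abs_le]
  exact ⟨le_max_right _ _, max_le (min_le_right _ _) (by linarith)⟩

lemma mul_softThreshold {c : ℝ} (hc : 0 ≤ c) (a : ℝ) :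
    a * softThreshold c a = softThreshold c a ^ 2 + c * |softThreshold c a| := by
  unfold softThreshold
  rcases le_total a (-c) with h | h
  · rw [min_eq_left (by linarith), max_eq_right h, abs_of_nonpos (by linarith)]
    ring
  rcases le_total a c with h' | h'
  · simp [min_eq_left h', max_eq_left h]
  · rw [min_eq_right h', max_eq_left (by linarith), abs_of_nonneg (by linarith)]
    ring

lemma Real.sqrt_le_of_le_mul_sqrt {S c : ℝ} (hc : 0 ≤ c) (h : S ≤ c * √S) : √S ≤ c := by
  by_contra! hlt
  have hS : 0 < S := Real.sqrt_pos.mp (hc.trans_lt hlt)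
  nlinarith [Real.mul_self_sqrt hS.le]

lemma sum_mul_le_mul_sum_abs {ι : Type*} (s : Finset ι) {u : ι → ℝ} {c : ℝ}
    (hu : ∀ i ∈ s, |u i| ≤ c) (x : ι → ℝ) : ∑ i ∈ s, u i * x i ≤ c * ∑ i ∈ s, |x i| := by
  rw [mul_sum]
  refine sum_le_sum fun i hi => ?_
  calc u i * x i ≤ |u i| * |x i| := by rw [← abs_mul]; exact le_abs_self _
    _ ≤ c * |x i| := mul_le_mul_of_nonneg_right (hu i hi) (abs_nonneg _)

section SparseGroup

variable {ι κ : Type*} [Fintype ι] [Fintype κ] {G : κ → Finset ι}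

lemma sum_eq_sum_sum_of_partition {M : Type*} [AddCommMonoid M] (hG : Pairwise (Disjoint on G))
    (hcover : ∀ i, ∃ j, i ∈ G j) (f : ι → M) : ∑ i, f i = ∑ j, ∑ k ∈ G j, f k := by
  classical
  rw [← sum_biUnion (hG.set_pairwise _)]
  congr
  ext i
  simpa using hcover i

lemma sum_mul_le_groupPenalty (hG : Pairwise (Disjoint on G)) (hcover : ∀ i, ∃ j, i ∈ G j)
    {lam₁ : ℝ} {ω : κ → ℝ} {u : ι → ℝ} (hu : ∀ j, √(∑ k ∈ G j, u k ^ 2) ≤ lam₁ * ω j)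
    (x : ι → ℝ) : ∑ i, u i * x i ≤ lam₁ * ∑ j, ω j * √(∑ k ∈ G j, x k ^ 2) := by
  rw [sum_eq_sum_sum_of_partition hG hcover, mul_sum]
  refine sum_le_sum fun j _ => ?_
  calc ∑ k ∈ G j, u k * x k ≤ √(∑ k ∈ G j, u k ^ 2) * √(∑ k ∈ G j, x k ^ 2) :=
        Real.sum_mul_le_sqrt_mul_sqrt _ _ _
    _ ≤ lam₁ * ω j * √(∑ k ∈ G j, x k ^ 2) := by gcongr; exact hu j
    _ = lam₁ * (ω j * √(∑ k ∈ G j, x k ^ 2)) := mul_assoc _ _ _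

lemma sparseGroupPenalty_ite_mem [DecidableEq ι] (hG : Pairwise (Disjoint on G))
    (lam₁ lam₂ : ℝ) (ω : κ → ℝ) (j : κ) (z : ι → ℝ) :
    sparseGroupPenalty G lam₁ lam₂ ω (fun i => if i ∈ G j then z i else 0) =
      lam₁ * (ω j * √(∑ k ∈ G j, z k ^ 2)) + lam₂ * ∑ k ∈ G j, |z k| := by
  classical
  have hgroup : ∀ b, ∑ k ∈ G b, (if k ∈ G j then z k else 0) ^ 2 =
      if b = j then ∑ k ∈ G j, z k ^ 2 else 0 := by
    intro b
    simp only [ite_pow, ne_eq, OfNat.ofNat_ne_zero, not_false_eq_true, zero_pow, sum_ite_mem]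
    split_ifs with hb
    · rw [hb, inter_self]
    · rw [disjoint_iff_inter_eq_empty.mp (hG hb), sum_empty]
  simp only [sparseGroupPenalty, hgroup, apply_ite Real.sqrt, Real.sqrt_zero, mul_ite, mul_zero,
    sum_ite_eq', mem_univ, if_true, apply_ite abs, abs_zero, sum_ite_mem, univ_inter]

lemma sqrt_sum_sq_softThreshold_le (hG : Pairwise (Disjoint on G))
    {lam₁ lam₂ : ℝ} (hlam₁ : 0 ≤ lam₁) (hlam₂ : 0 ≤ lam₂) {ω : κ → ℝ} (hω : ∀ j, 0 ≤ ω j)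
    {y : ι → ℝ} (hy : ∀ x, ∑ i, y i * x i ≤ sparseGroupPenalty G lam₁ lam₂ ω x) (j : κ) :
    √(∑ k ∈ G j, softThreshold lam₂ (y k) ^ 2) ≤ lam₁ * ω j := by
  classical
  have htest := hy fun i => if i ∈ G j then softThreshold lam₂ (y i) else 0
  simp only [sparseGroupPenalty_ite_mem hG, mul_ite, mul_zero, sum_ite_mem, univ_inter,
    mul_softThreshold hlam₂, sum_add_distrib, ← mul_sum] at htest
  exact Real.sqrt_le_of_le_mul_sqrt (mul_nonneg hlam₁ (hω j)) (by linarith)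

theorem forall_sum_mul_le_sparseGroupPenalty_iff (hG : Pairwise (Disjoint on G))
    (hcover : ∀ i, ∃ j, i ∈ G j) {lam₁ lam₂ : ℝ} (hlam₁ : 0 ≤ lam₁) (hlam₂ : 0 ≤ lam₂)
    {ω : κ → ℝ} (hω : ∀ j, 0 ≤ ω j) (y : EuclideanSpace ℝ ι) :
    (∀ x : EuclideanSpace ℝ ι, ∑ i, y i * x i ≤ sparseGroupPenalty G lam₁ lam₂ ω x) ↔
      ∃ y₁ y₂ : EuclideanSpace ℝ ι, y = y₁ + y₂ ∧ (∀ i, |y₁ i| ≤ lam₂) ∧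
        ∀ j, √(∑ k ∈ G j, y₂ k ^ 2) ≤ lam₁ * ω j := by
  constructor
  · intro hy
    refine ⟨WithLp.toLp 2 fun i => y i - softThreshold lam₂ (y i),
      WithLp.toLp 2 fun i => softThreshold lam₂ (y i), by ext; simp, fun i => ?_, fun j => ?_⟩
    · exact abs_sub_softThreshold_le hlam₂ (y i)
    · exact sqrt_sum_sq_softThreshold_le hG hlam₁ hlam₂ hω (fun x => hy (WithLp.toLp 2 x)) j
  · rintro ⟨y₁, y₂, rfl, hy₁, hy₂⟩ x
    simp only [PiLp.add_apply, add_mul, sum_add_distrib, sparseGroupPenalty]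
    linarith [sum_mul_le_mul_sum_abs univ (fun i _ => hy₁ i) x,
      sum_mul_le_groupPenalty hG hcover hy₂ x]

end SparseGroup

theorem dual_norm_ball_sum_general (n J : ℕ)
    (G : Fin J → Finset (Fin n))
    (hGdisj : ∀ j k, j ≠ k → Disjoint (G j) (G k))
    (hGcover : ∀ i, ∃ j, i ∈ G j)
    (lam₁ lam₂ : ℝ) (hlam₁ : 0 ≤ lam₁) (hlam₂ : 0 ≤ lam₂)
    (ω : Fin J → ℝ) (hω : ∀ j, 0 < ω j) :
    ∀ y : EuclideanSpace ℝ (Fin n),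
      (∀ x : EuclideanSpace ℝ (Fin n),
          (∑ i, y i * x i) ≤
            lam₁ * (∑ j, ω j * Real.sqrt (∑ k ∈ G j, (x k) ^ 2)) + lam₂ * ∑ i, |x i|)
      ↔ ∃ y₁ y₂ : EuclideanSpace ℝ (Fin n),
          y = y₁ + y₂ ∧ (∀ i, |y₁ i| ≤ lam₂) ∧
          ∀ j, Real.sqrt (∑ k ∈ G j, (y₂ k) ^ 2) ≤ lam₁ * ω j :=
  forall_sum_mul_le_sparseGroupPenalty_iff (fun j k hjk => hGdisj j k hjk) hGcover hlam₁ hlam₂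
    (fun j => (hω j).le)

/-- For `p(x) = λ₁ Σⱼ ωⱼ‖x_{Gⱼ}‖ + λ₂‖x‖₁`, a vector `y` satisfies
`⟨y, x⟩ ≤ p(x)` for all `x` if and only if `y = y₁ + y₂` with `|(y₁)ᵢ| ≤ λ₂` for all `i`
and `‖(y₂)_{Gⱼ}‖ ≤ λ₁ωⱼ` for all `j`; i.e. the set `{y : ⟨y,x⟩ ≤ p(x) ∀x}` is the
Minkowski sum of the `ℓ∞`-ball of radius `λ₂` and the product of groupwise `ℓ₂`-balls
of radii `λ₁ωⱼ`. -/
theorem dual_norm_ball_sum (n J : ℕ) (hn : 0 < n) (hJ : 0 < J)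
    (G : Fin J → Finset (Fin n))
    (hGne : ∀ j, (G j).Nonempty)
    (hGdisj : ∀ j k, j ≠ k → Disjoint (G j) (G k))
    (hGcover : ∀ i, ∃ j, i ∈ G j)
    (lam₁ lam₂ : ℝ) (hlam₁ : 0 ≤ lam₁) (hlam₂ : 0 ≤ lam₂)
    (ω : Fin J → ℝ) (hω : ∀ j, 0 < ω j) :
    ∀ y : EuclideanSpace ℝ (Fin n),
      (∀ x : EuclideanSpace ℝ (Fin n),
          (∑ i, y i * x i) ≤
            lam₁ * (∑ j, ω j * Real.sqrt (∑ k ∈ G j, (x k) ^ 2)) + lam₂ * ∑ i, |x i|)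
      ↔ ∃ y₁ y₂ : EuclideanSpace ℝ (Fin n),
          y = y₁ + y₂ ∧ (∀ i, |y₁ i| ≤ lam₂) ∧
          ∀ j, Real.sqrt (∑ k ∈ G j, (y₂ k) ^ 2) ≤ lam₁ * ω j :=
  dual_norm_ball_sum_general n J G hGdisj hGcover lam₁ lam₂ hlam₁ hlam₂ ω hω
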